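/- arXiv:2207.14139 — 3 statements merged into one kernel-verified Lean document; each statement's English description precedes it below -/
import Mathlib

section
/- If x is an element of a G-set (where G = Sym(𝔸) acts on the set) and x has a finite support, then x has a unique least finite support, given by the intersection of all finite supports of x. -/
open scoped Pointwise

section NominalDefs

variable (𝔸 : Type*) {X : Type*}

/-- A permutation is finitary if it moves only finitely many atoms. -/
def Finitary (π : Equiv.Perm 𝔸) : Prop := {a : 𝔸 | π a ≠ a}.Finite

/-- `S` supports `x` if every finitary permutation fixing `S` pointwise fixes `x`. -/
def Supports [MulAction (Equiv.Perm 𝔸) X] (S : Set 𝔸) (x : X) : Prop :=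
  ∀ π : Equiv.Perm 𝔸, Finitary 𝔸 π → (∀ a ∈ S, π a = a) → π • x = x

def FinitelySupported [MulAction (Equiv.Perm 𝔸) X] (x : X) : Prop :=
  ∃ S : Set 𝔸, S.Finite ∧ Supports 𝔸 S x

/-- The intersection of all finite supports of `x`. -/
def supp [MulAction (Equiv.Perm 𝔸) X] (x : X) : Set 𝔸 :=
  ⋂₀ {S : Set 𝔸 | S.Finite ∧ Supports 𝔸 S x}

/-- A nominal set: a `Perm 𝔸`-set all of whose elements are finitely supported. -/
class Nominal (X : Type*) [MulAction (Equiv.Perm 𝔸) X] : Prop where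
  fs : ∀ x : X, FinitelySupported 𝔸 x

/-- Alpha-equivalence on pairs `⟨a, x⟩`. -/
def absRel [DecidableEq 𝔸] [MulAction (Equiv.Perm 𝔸) X] (p q : 𝔸 × X) : Prop :=
  ∀ c : 𝔸, c ∉ (({p.1, q.1} : Set 𝔸) ∪ supp 𝔸 p.2 ∪ supp 𝔸 q.2) →
    Equiv.swap p.1 c • p.2 = Equiv.swap q.1 c • q.2

end NominalDefs

section Aux

variable {𝔸 X : Type*} [Infinite 𝔸] [MulAction (Equiv.Perm 𝔸) X]

lemma finitary_swap [DecidableEq 𝔸] (a b : 𝔸) : Finitary 𝔸 (Equiv.swap a b) := by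
  apply Set.Finite.subset ((Set.finite_singleton b).insert a)
  intro c hc
  by_contra hmem
  simp only [Set.mem_insert_iff, Set.mem_singleton_iff, not_or] at hmem
  exact hc (Equiv.swap_apply_of_ne_of_ne hmem.1 hmem.2)

lemma swap_three [DecidableEq 𝔸] {a b c : 𝔸} (hab : a ≠ b) (hca : c ≠ a) (hcb : c ≠ b) :
    Equiv.swap a b = Equiv.swap a c * (Equiv.swap b c * Equiv.swap a c) := by
  ext y
  simp only [Equiv.Perm.mul_apply, Equiv.swap_apply_def]
  split_ifs <;> simp_all

lemma inter_supports {S T : Set 𝔸} {x : X} (hS : S.Finite) (hT : T.Finite)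
    (hSs : Supports 𝔸 S x) (hTs : Supports 𝔸 T x) : Supports 𝔸 (S ∩ T) x := by
  classical
  have swap_lem : ∀ a b : 𝔸, a ∉ S ∩ T → b ∉ S ∩ T → Equiv.swap a b • x = x := by
    intro a b ha hb
    rcases eq_or_ne a b with rfl | hab
    · rw [Equiv.swap_self]
      exact one_smul _ x
    obtain ⟨c, hc⟩ :=
      (((hS.union hT).insert a).insert b).infinite_compl.nonempty
    simp only [Set.mem_compl_iff, Set.mem_insert_iff, Set.mem_union, not_or] at hc
    obtain ⟨hcb, hca, hcS, hcT⟩ := hc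
    have key : ∀ d : 𝔸, d ∉ S ∩ T → Equiv.swap d c • x = x := by
      intro d hd
      rw [Set.mem_inter_iff, not_and_or] at hd
      rcases hd with hd | hd
      · apply hSs _ (finitary_swap d c)
        intro s hs
        exact Equiv.swap_apply_of_ne_of_ne (fun h => hd (h ▸ hs)) (fun h => hcS (h ▸ hs))
      · apply hTs _ (finitary_swap d c)
        intro s hs
        exact Equiv.swap_apply_of_ne_of_ne (fun h => hd (h ▸ hs)) (fun h => hcT (h ▸ hs))
    rw [swap_three hab hca hcb, mul_smul, mul_smul,
      key a ha, key b hb, key a ha]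
  have main : ∀ n : ℕ, ∀ π : Equiv.Perm 𝔸, ∀ hπ : Finitary 𝔸 π,
      hπ.toFinset.card ≤ n → (∀ a ∈ S ∩ T, π a = a) → π • x = x := by
    intro n
    induction n with
    | zero =>
      intro π hπ hcard hfix
      have : π = 1 := by
        ext a
        by_contra hne
        have : a ∈ hπ.toFinset := (Set.Finite.mem_toFinset _).mpr hne
        simp [Finset.card_eq_zero.mp (Nat.le_zero.mp hcard)] at this
      rw [this, one_smul]
    | succ n ih =>
      intro π hπ hcard hfix
      rcases Finset.eq_empty_or_nonempty hπ.toFinset with he | ⟨a, ha⟩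
      · have : π = 1 := by
          ext a
          by_contra hne
          have : a ∈ hπ.toFinset := (Set.Finite.mem_toFinset _).mpr hne
          simp [he] at this
        rw [this, one_smul]
      · have haD : π a ≠ a := (Set.Finite.mem_toFinset _).mp ha
        have hπaD : π (π a) ≠ π a := fun h => haD (π.injective h)
        have haST : a ∉ S ∩ T := fun h => haD (hfix a h)
        have hπaST : π a ∉ S ∩ T := fun h => hπaD (hfix _ h)
        set π₂ := Equiv.swap a (π a) * π with hπ₂def
        have hsub : {c : 𝔸 | π₂ c ≠ c} ⊆ {c : 𝔸 | π c ≠ c} \ {a} := by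
          intro c hc
          simp only [Set.mem_setOf_eq, hπ₂def, Equiv.Perm.mul_apply] at hc
          have hcna : c ≠ a := by
            rintro rfl
            exact hc (by rw [Equiv.swap_apply_right])
          refine ⟨?_, hcna⟩
          intro hcc
          rw [hcc] at hc
          have hcnπa : c ≠ π a := by
            rintro rfl
            exact hπaD hcc
          exact hc (Equiv.swap_apply_of_ne_of_ne hcna hcnπa)
        have hπ₂fin : Finitary 𝔸 π₂ :=
          hπ.subset (hsub.trans Set.diff_subset)
        have hcard₂ : hπ₂fin.toFinset.card ≤ n := by
          have h1 : hπ₂fin.toFinset ⊆ hπ.toFinset.erase a := by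
            intro c hc
            replace hc := (Set.Finite.mem_toFinset _).mp hc
            have := hsub hc
            simp only [Set.mem_diff, Set.mem_singleton_iff] at this
            rw [Finset.mem_erase]
            exact ⟨this.2, (Set.Finite.mem_toFinset _).mpr this.1⟩
          calc hπ₂fin.toFinset.card ≤ (hπ.toFinset.erase a).card := Finset.card_le_card h1
            _ = hπ.toFinset.card - 1 := Finset.card_erase_of_mem ha
            _ ≤ n := by omega
        have hfix₂ : ∀ c ∈ S ∩ T, π₂ c = c := by
          intro c hc
          have hcfix := hfix c hc
          simp only [hπ₂def, Equiv.Perm.mul_apply, hcfix]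
          exact Equiv.swap_apply_of_ne_of_ne (fun h => haST (h ▸ hc))
            (fun h => hπaST (h ▸ hc))
        have hx₂ : π₂ • x = x := ih π₂ hπ₂fin hcard₂ hfix₂
        have hdecomp : π = Equiv.swap a (π a) * π₂ := by
          rw [hπ₂def, ← mul_assoc, Equiv.swap_mul_self, one_mul]
        rw [hdecomp, mul_smul, hx₂, swap_lem a (π a) haST hπaST]
  intro π hπ hfix
  exact main hπ.toFinset.card π hπ le_rfl hfix

end Aux

theorem stmt0 {𝔸 X : Type*} [Infinite 𝔸] [Countable 𝔸] [MulAction (Equiv.Perm 𝔸) X]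
    (x : X) (h : FinitelySupported 𝔸 x) :
    (supp 𝔸 x).Finite ∧ Supports 𝔸 (supp 𝔸 x) x ∧
      ∀ S : Set 𝔸, S.Finite → Supports 𝔸 S x → supp 𝔸 x ⊆ S := by
  classical
  obtain ⟨S₀, hS₀fin, hS₀s⟩ := h
  have hmem₀ : S₀ ∈ {S : Set 𝔸 | S.Finite ∧ Supports 𝔸 S x} := ⟨hS₀fin, hS₀s⟩
  have hsubS₀ : supp 𝔸 x ⊆ S₀ := Set.sInter_subset_of_mem hmem₀
  have hfin : (supp 𝔸 x).Finite := hS₀fin.subset hsubS₀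
  refine ⟨hfin, ?_, fun S hSf hSs => Set.sInter_subset_of_mem ⟨hSf, hSs⟩⟩
  -- supp = ⋂₀ F where F is a finite family of finite supports
  set F : Set (Set 𝔸) := (fun T => S₀ ∩ T) '' {S : Set 𝔸 | S.Finite ∧ Supports 𝔸 S x} with hF
  have hFfin : F.Finite := by
    apply Set.Finite.subset hS₀fin.finite_subsets
    rintro _ ⟨T, -, rfl⟩
    exact Set.inter_subset_left
  have hFmem : ∀ A ∈ F, A.Finite ∧ Supports 𝔸 A x := by
    rintro _ ⟨T, ⟨hTfin, hTs⟩, rfl⟩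
    exact ⟨hS₀fin.inter_of_left T, inter_supports hS₀fin hTfin hS₀s hTs⟩
  have hsuppF : supp 𝔸 x = ⋂₀ F := by
    ext a
    simp only [supp, Set.mem_sInter, hF, Set.mem_image, Set.mem_setOf_eq]
    constructor
    · rintro ha _ ⟨T, hT, rfl⟩
      exact ⟨ha S₀ hmem₀, ha T hT⟩
    · intro ha T hT
      exact (ha (S₀ ∩ T) ⟨T, hT, rfl⟩).2
  have hne : F.Nonempty := ⟨S₀ ∩ S₀, S₀, hmem₀, rfl⟩
  -- finite nonempty intersection of supports is a support
  have key : ∀ F' : Set (Set 𝔸), F'.Finite → F'.Nonempty →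
      (∀ A ∈ F', A.Finite ∧ Supports 𝔸 A x) → Supports 𝔸 (⋂₀ F') x := by
    intro F' hF'fin
    induction F', hF'fin using Set.Finite.induction_on with
    | empty => rintro ⟨A, hA⟩; exact absurd hA (Set.notMem_empty A)
    | @insert A F' hA hF'fin ih =>
      intro _ hall
      rcases F'.eq_empty_or_nonempty with rfl | hne'
      · simpa using (hall A (Set.mem_insert _ _)).2
      · have h1 := hall A (Set.mem_insert A F')
        have h2 : ∀ B ∈ F', B.Finite ∧ Supports 𝔸 B x :=
          fun B hB => hall B (Set.mem_insert_of_mem A hB)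
        have hIs : Supports 𝔸 (⋂₀ F') x := ih hne' h2
        have hIfin : (⋂₀ F').Finite := by
          obtain ⟨B, hB⟩ := hne'
          exact ((h2 B hB).1).subset (Set.sInter_subset_of_mem hB)
        rw [Set.sInter_insert]
        exact inter_supports h1.1 hIfin h1.2 hIs
  rw [hsuppF]
  exact key F hFfin hne hFmem
end

section
/- The abstraction set [𝔸]X, consisting of the equivalence classes of 𝔸 × X under the alpha-equivalence relation, is a nominal set whenever X is (every equivalence class has finite support under the pointwise permutation action). -/
open scoped Pointwise

section Aux
variable {𝔸 X : Type*} [MulAction (Equiv.Perm 𝔸) X]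

lemma finitary_conj {σ : Equiv.Perm 𝔸} (π : Equiv.Perm 𝔸) (hσ : Finitary 𝔸 σ) :
    Finitary 𝔸 (π * σ * π⁻¹) := by
  apply Set.Finite.subset (hσ.image π)
  intro b hb
  simp only [Set.mem_setOf_eq, Equiv.Perm.mul_apply] at hb
  refine ⟨π⁻¹ b, ?_, by simp⟩
  intro h
  rw [Equiv.Perm.inv_def] at h
  simp [h] at hb

lemma supports_smul {S : Set 𝔸} {y : X} (π : Equiv.Perm 𝔸) (hS : Supports 𝔸 S y) :
    Supports 𝔸 (π '' S) (π • y) := by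
  intro σ hσ hfix
  have h : (π⁻¹ * σ * π) • y = y := by
    refine hS _ ?_ ?_
    · have := finitary_conj π⁻¹ hσ
      simpa [mul_assoc] using this
    · intro b hb
      have := hfix (π b) ⟨b, hb, rfl⟩
      simp [Equiv.Perm.mul_apply, this]
  calc σ • π • y = π • (π⁻¹ * σ * π) • y := by
        simp [mul_smul]
    _ = π • y := by rw [h]

lemma supp_smul_subset (π : Equiv.Perm 𝔸) (y : X) :
    supp 𝔸 (π • y) ⊆ π '' supp 𝔸 y := by
  intro b hb
  refine ⟨π⁻¹ b, ?_, by simp⟩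
  intro T hT
  obtain ⟨hTfin, hTsupp⟩ := hT
  have : b ∈ π '' T := hb (π '' T) ⟨hTfin.image π, supports_smul π hTsupp⟩
  obtain ⟨c, hc, rfl⟩ := this
  simpa using hc

lemma supp_smul (π : Equiv.Perm 𝔸) (y : X) :
    supp 𝔸 (π • y) = π '' supp 𝔸 y := by
  apply Set.Subset.antisymm (supp_smul_subset π y)
  intro b hb
  obtain ⟨c, hc, rfl⟩ := hb
  have h2 := supp_smul_subset π⁻¹ (π • y)
  rw [inv_smul_smul] at h2
  obtain ⟨d, hd, hdc⟩ := h2 hc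
  rw [← hdc, show π (π⁻¹ d) = d from π.apply_symm_apply d]
  exact hd

lemma absRel_smul [DecidableEq 𝔸] {p q : 𝔸 × X} (π : Equiv.Perm 𝔸)
    (h : absRel 𝔸 p q) : absRel 𝔸 (π • p) (π • q) := by
  intro c hc
  have hc' : π⁻¹ c ∉ (({p.1, q.1} : Set 𝔸) ∪ supp 𝔸 p.2 ∪ supp 𝔸 q.2) := by
    intro hmem
    apply hc
    have hps : π • p = (π p.1, π • p.2) := rfl
    have hqs : π • q = (π q.1, π • q.2) := rfl
    rw [hps, hqs]
    simp only [supp_smul, Set.mem_union, Set.mem_insert_iff, Set.mem_singleton_iff] at hmem ⊢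
    rcases hmem with (h1 | h1) | h1
    · rcases h1 with h1 | h1
      · left; left; left; rw [← h1]; simp
      · left; left; right; rw [← h1]; simp
    · left; right; exact ⟨_, h1, by simp⟩
    · right; exact ⟨_, h1, by simp⟩
  have key := h (π⁻¹ c) hc'
  have conj : ∀ (b : 𝔸), Equiv.swap (π b) c = π * Equiv.swap b (π⁻¹ c) * π⁻¹ := by
    intro b
    have := Equiv.swap_apply_apply π b (π⁻¹ c)
    rwa [show π (π⁻¹ c) = c from π.apply_symm_apply c] at this
  have hps : π • p = (π p.1, π • p.2) := rfl
  have hqs : π • q = (π q.1, π • q.2) := rfl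
  rw [hps, hqs]
  simp only
  rw [conj p.1, conj q.1, mul_smul, mul_smul, mul_smul, mul_smul,
    inv_smul_smul, inv_smul_smul, key]
end Aux


theorem stmt9 {𝔸 X : Type*} [Infinite 𝔸] [Countable 𝔸] [DecidableEq 𝔸]
    [MulAction (Equiv.Perm 𝔸) X] [Nominal 𝔸 X] (a : 𝔸) (x : X) :
    FinitelySupported 𝔸 ({q : 𝔸 × X | absRel 𝔸 (a, x) q} : Set (𝔸 × X)) := by
  obtain ⟨S, hSfin, hSsupp⟩ := Nominal.fs (𝔸 := 𝔸) x
  refine ⟨insert a S, hSfin.insert a, ?_⟩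
  intro π hπ hfix
  have ha : π a = a := hfix a (Set.mem_insert a S)
  have hx : π • x = x := hSsupp π hπ (fun b hb => hfix b (Set.mem_insert_of_mem a hb))
  have hax : π • ((a, x) : 𝔸 × X) = (a, x) := by
    have : π • ((a, x) : 𝔸 × X) = (π a, π • x) := rfl
    rw [this, ha, hx]
  have ha' : π⁻¹ a = a := π.injective (by rw [show π (π⁻¹ a) = a from π.apply_symm_apply a, ha])
  have hx' : π⁻¹ • x = x := by conv_lhs => rw [← hx, inv_smul_smul]
  have hax' : π⁻¹ • ((a, x) : 𝔸 × X) = (a, x) := by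
    have : π⁻¹ • ((a, x) : 𝔸 × X) = (π⁻¹ a, π⁻¹ • x) := rfl
    rw [this, ha', hx']
  ext q
  constructor
  · rintro ⟨r, hr, rfl⟩
    have := absRel_smul π (hr : absRel 𝔸 (a, x) r)
    rwa [hax] at this
  · intro hq
    refine ⟨π⁻¹ • q, ?_, by simp⟩
    have := absRel_smul π⁻¹ (hq : absRel 𝔸 (a, x) q)
    rwa [hax'] at this
end

section
/- If S₁ and S₂ are both finite supports of an element x of a Sym(𝔸)-set, then S₁ ∩ S₂ is also a support of x. -/
open scoped Pointwise

theorem stmt16 {𝔸 X : Type*} [Infinite 𝔸] [MulAction (Equiv.Perm 𝔸) X]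
    (x : X) (S₁ S₂ : Set 𝔸) (h₁ : S₁.Finite) (h₂ : S₂.Finite)
    (hS₁ : Supports 𝔸 S₁ x) (hS₂ : Supports 𝔸 S₂ x) :
    Supports 𝔸 (S₁ ∩ S₂) x := by
  classical
  -- key claim by strong induction on the number of atoms of `S₂ \ S₁` moved by `π`
  suffices key : ∀ n : ℕ, ∀ π : Equiv.Perm 𝔸, Finitary 𝔸 π →
      (∀ a ∈ S₁ ∩ S₂, π a = a) → ((S₂ \ S₁) ∩ {a | π a ≠ a}).ncard ≤ n → π • x = x by
    intro π hπ hfix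
    exact key ((S₂ \ S₁) ∩ {a | π a ≠ a}).ncard π hπ hfix le_rfl
  intro n
  induction n with
  | zero =>
    intro π hπ hfix hcard
    have hMfin : ((S₂ \ S₁) ∩ {a | π a ≠ a}).Finite := hπ.subset Set.inter_subset_right
    have hM : (S₂ \ S₁) ∩ {a | π a ≠ a} = ∅ :=
      (Set.ncard_eq_zero hMfin).mp (Nat.le_zero.mp hcard)
    apply hS₂ π hπ
    intro a ha
    by_cases haS₁ : a ∈ S₁
    · exact hfix a ⟨haS₁, ha⟩
    · by_contra hne
      exact absurd hM (Set.nonempty_iff_ne_empty.mp ⟨a, ⟨ha, haS₁⟩, hne⟩)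
  | succ n ih =>
    intro π hπ hfix hcard
    set M : Set 𝔸 := (S₂ \ S₁) ∩ {a | π a ≠ a} with hMdef
    have hMfin : M.Finite := hπ.subset Set.inter_subset_right
    rcases Set.eq_empty_or_nonempty M with hM | ⟨a, haM⟩
    · apply hS₂ π hπ
      intro a ha
      by_cases haS₁ : a ∈ S₁
      · exact hfix a ⟨haS₁, ha⟩
      · by_contra hne
        exact absurd hM (Set.nonempty_iff_ne_empty.mp ⟨a, ⟨ha, haS₁⟩, hne⟩)
    · obtain ⟨⟨haS₂, haS₁⟩, hamoved⟩ := haM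
      -- choose a fresh atom c
      have hBfin : (S₁ ∪ S₂ ∪ {b | π b ≠ b}).Finite := (h₁.union h₂).union hπ
      obtain ⟨c, hc⟩ := hBfin.infinite_compl.nonempty
      have hcS₁ : c ∉ S₁ := fun h => hc (Or.inl (Or.inl h))
      have hcS₂ : c ∉ S₂ := fun h => hc (Or.inl (Or.inr h))
      have hcπ : π c = c := by
        by_contra h; exact hc (Or.inr h)
      have hac : a ≠ c := fun h => hcS₂ (h ▸ haS₂)
      set τ : Equiv.Perm 𝔸 := Equiv.swap a c with hτdef
      have hττ : τ * τ = 1 := Equiv.swap_mul_self a c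
      set π' : Equiv.Perm 𝔸 := τ * π * τ with hπ'def
      have hπ'app : ∀ b, π' b = τ (π (τ b)) := fun b => rfl
      -- π' is finitary
      have hπ'fin : Finitary 𝔸 π' := by
        apply (hπ.image τ).subset
        intro b hb
        refine ⟨τ b, ?_, by simp [hτdef, Equiv.swap_apply_self]⟩
        intro hfix'
        exact hb (by rw [hπ'app, hfix']; simp [hτdef, Equiv.swap_apply_self])
      -- π' fixes S₁ ∩ S₂
      have hπ'fix : ∀ b ∈ S₁ ∩ S₂, π' b = b := by
        intro b hb
        have hba : b ≠ a := fun h => haS₁ (h ▸ hb.1)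
        have hbc : b ≠ c := fun h => hcS₁ (h ▸ hb.1)
        rw [hπ'app, Equiv.swap_apply_of_ne_of_ne hba hbc, hfix b hb,
          Equiv.swap_apply_of_ne_of_ne hba hbc]
      -- moved set of π' within S₂ \ S₁ is contained in M \ {a}
      have hsub : (S₂ \ S₁) ∩ {b | π' b ≠ b} ⊆ M \ {a} := by
        rintro b ⟨hbd, hbm⟩
        have hbc : b ≠ c := fun h => hcS₂ (h ▸ hbd.1)
        have hba : b ≠ a := by
          rintro rfl
          apply hbm
          rw [hπ'app, Equiv.swap_apply_left, hcπ, Equiv.swap_apply_right]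
        have hπb : π b ≠ b := by
          intro h
          apply hbm
          rw [hπ'app, Equiv.swap_apply_of_ne_of_ne hba hbc, h,
            Equiv.swap_apply_of_ne_of_ne hba hbc]
        exact ⟨⟨hbd, hπb⟩, hba⟩
      have hcard' : ((S₂ \ S₁) ∩ {b | π' b ≠ b}).ncard ≤ n := by
        have h1 : ((S₂ \ S₁) ∩ {b | π' b ≠ b}).ncard ≤ (M \ {a}).ncard :=
          Set.ncard_le_ncard hsub (hMfin.subset Set.diff_subset)
        have h2 : (M \ {a}).ncard = M.ncard - 1 :=
          Set.ncard_diff_singleton_of_mem (s := M) ⟨⟨haS₂, haS₁⟩, hamoved⟩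
        have h3 : 1 ≤ M.ncard :=
          (Set.ncard_pos hMfin).mpr ⟨a, ⟨⟨haS₂, haS₁⟩, hamoved⟩⟩
        omega
      have hπ'x : π' • x = x := ih π' hπ'fin hπ'fix hcard'
      -- τ fixes x
      have hτfin : Finitary 𝔸 τ := by
        apply ((Set.finite_singleton c).insert a).subset
        intro b hb
        by_contra hb'
        simp only [Set.mem_insert_iff, Set.mem_singleton_iff] at hb'
        push_neg at hb'
        exact hb (Equiv.swap_apply_of_ne_of_ne hb'.1 hb'.2)
      have hτx : τ • x = x := by
        apply hS₁ τ hτfin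
        intro b hb
        exact Equiv.swap_apply_of_ne_of_ne (fun h => haS₁ (h ▸ hb)) (fun h => hcS₁ (h ▸ hb))
      have hπeq : π = τ * π' * τ := by
        rw [hπ'def]
        group
        rw [hττ, one_mul, mul_assoc, hττ, mul_one]
      calc π • x = τ • π' • τ • x := by rw [hπeq, mul_smul, mul_smul]
        _ = x := by rw [hτx, hπ'x, hτx]
end
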